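/- Let b ∈ BMO(ℝ), let (ψ_I)_{I dyadic} be a wavelet basis of L²(ℝ) with each ψ_I supported in I, L²-adapted with |ψ_I| ≲ |I|^{−1/2}, and let (φ_I) be L¹-normalized bumps with |φ_I(t)| ≲ |I|^{−1} w_I(t)^{−N} and |φ_I'(t)| ≲ |I|^{−2} w_I(t)^{−N}. Define the paraproduct kernel K(t,x) = Σ_{I dyadic} ⟨b, ψ_I⟩ φ_I(t) ψ_I(x), where for t ≠ x the sum is over the dyadic intervals I containing t, x (finitely indexed by scales above the smallest dyadic interval I_{t,x} containing both). Then K satisfies the standard Calderón–Zygmund smoothness estimate |K(t,x) − K(t',x)| ≲ ‖b‖_{BMO}·|t−t'|/|t−x|² whenever 2|t−t'| < |t−x|. -/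

import Mathlib

/-!
Only the dyadic intervals `I` containing both `x` and `t` (resp. `t'`) contribute, so
`|I| ≥ |t - x| / 2`, and at each scale at most two closed dyadic intervals contain `x`.
By the mean value theorem the `I`-term of `K(t,x) - K(t',x)` is at most
`‖b‖ |I|^{1/2} · |I|^{-2} |t - t'| · |I|^{-1/2} = ‖b‖ |t - t'| |I|^{-2}`, and this is a
geometric series over the scales `|I| ≳ |t - x|`, with sum `≲ ‖b‖ |t - t'| / |t - x|²`.
-/

open Function Set

def dyadicInterval (q : ℤ × ℤ) : Set ℝ :=
  Icc ((2 : ℝ) ^ (-q.1) * q.2) ((2 : ℝ) ^ (-q.1) * (q.2 + 1))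

theorem hasSum_ite_le_mul_zpow_two (C : ℝ) (n : ℤ) :
    HasSum (fun j : ℤ => if j ≤ n then C * 2 ^ j else 0) (C * 2 ^ (n + 1)) := by
  have he : Injective fun m : ℕ => n - m := fun m m' h => by simpa using h
  refine (he.hasSum_iff fun j hj =>
    if_neg fun hjn => hj ⟨(n - j).toNat, show n - _ = j by omega⟩).mp ?_
  convert hasSum_geometric_two' (C * 2 ^ (n + 1)) using 1
  ext m
  simp only [comp_apply, sub_le_self_iff, Nat.cast_nonneg, if_true]
  rw [zpow_sub₀ two_ne_zero, zpow_add_one₀ two_ne_zero, zpow_natCast]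
  ring

theorem abs_sub_le_of_mem_dyadicInterval {q : ℤ × ℤ} {x y : ℝ} (hx : x ∈ dyadicInterval q)
    (hy : y ∈ dyadicInterval q) : |x - y| ≤ 2 ^ (-q.1) := by
  have := Real.dist_le_of_mem_Icc hx hy
  rwa [Real.dist_eq, mul_add, mul_one, add_sub_cancel_left] at this

theorem scale_le_of_mem_dyadicInterval {q : ℤ × ℤ} {x y r : ℝ} {n : ℤ}
    (hx : x ∈ dyadicInterval q) (hy : y ∈ dyadicInterval q) (hr : 0 < r)
    (hn : r⁻¹ ≤ 2 ^ (n + 1)) (h : r < |x - y|) : q.1 ≤ n := by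
  have hlt : (2 : ℝ) ^ q.1 < 2 ^ (n + 1) := calc
    (2 : ℝ) ^ q.1 = (2 ^ (-q.1))⁻¹ := by rw [zpow_neg, inv_inv]
    _ < r⁻¹ := inv_strictAnti₀ hr (h.trans_le (abs_sub_le_of_mem_dyadicInterval hx hy))
    _ ≤ 2 ^ (n + 1) := hn
  have := (zpow_lt_zpow_iff_right₀ one_lt_two).mp hlt
  omega

theorem eq_floor_or_eq_floor_sub_one_of_mem_dyadicInterval {q : ℤ × ℤ} {x : ℝ}
    (hx : x ∈ dyadicInterval q) : q.2 = ⌊x * 2 ^ q.1⌋ ∨ q.2 = ⌊x * 2 ^ q.1⌋ - 1 := by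
  obtain ⟨hlo, hhi⟩ := hx
  have hpos : (0 : ℝ) < 2 ^ q.1 := zpow_pos two_pos _
  rw [zpow_neg, inv_mul_eq_div, div_le_iff₀ hpos] at hlo
  rw [zpow_neg, inv_mul_eq_div, le_div_iff₀ hpos] at hhi
  replace hhi : x * 2 ^ q.1 ≤ ((q.2 + 1 : ℤ) : ℝ) := by push_cast; exact hhi
  have h1 := Int.le_floor.mpr hlo
  have h2 := (Int.floor_le_floor hhi).trans_eq (Int.floor_intCast _)
  omega

/-- At each scale `j`, the only two dyadic intervals of length `2⁻ʲ` that can contain `x`. -/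
noncomputable def dyadicCandidates (x : ℝ) : ℤ ⊕ ℤ → ℤ × ℤ :=
  Sum.elim (fun j => (j, ⌊x * 2 ^ j⌋)) (fun j => (j, ⌊x * 2 ^ j⌋ - 1))

theorem dyadicCandidates_injective (x : ℝ) : Injective (dyadicCandidates x) := by
  rintro (j | j) (j' | j') h <;> simp only [dyadicCandidates, Sum.elim_inl, Sum.elim_inr,
    Prod.mk.injEq] at h <;> obtain ⟨rfl, h⟩ := h <;> first | rfl | omega

theorem mem_range_dyadicCandidates {q : ℤ × ℤ} {x : ℝ} (hx : x ∈ dyadicInterval q) :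
    q ∈ range (dyadicCandidates x) := by
  rcases eq_floor_or_eq_floor_sub_one_of_mem_dyadicInterval hx with h | h
  · exact ⟨.inl q.1, by simp [dyadicCandidates, ← h]⟩
  · exact ⟨.inr q.1, by simp [dyadicCandidates, ← h]⟩

theorem hasSum_dyadicCandidates_majorant (x C : ℝ) (n : ℤ) :
    HasSum (fun p => if (dyadicCandidates x p).1 ≤ n then C * 2 ^ (dyadicCandidates x p).1 else 0)
      (C * 2 ^ (n + 1) + C * 2 ^ (n + 1)) :=
  HasSum.sum (hasSum_ite_le_mul_zpow_two C n :) (hasSum_ite_le_mul_zpow_two C n :)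

section DyadicSupport

variable {F : ℤ × ℤ → ℝ} {x C : ℝ} {n : ℤ}

variable (hF : ∀ q, F q ≠ 0 → x ∈ dyadicInterval q ∧ q.1 ≤ n)
  (hbd : ∀ q, q.1 ≤ n → |F q| ≤ C * 2 ^ q.1)
include hF

theorem support_subset_range_dyadicCandidates : support F ⊆ range (dyadicCandidates x) :=
  fun q hq => mem_range_dyadicCandidates (hF q hq).1

include hbd

theorem norm_comp_dyadicCandidates_le (p : ℤ ⊕ ℤ) :
    ‖F (dyadicCandidates x p)‖ ≤
      if (dyadicCandidates x p).1 ≤ n then C * 2 ^ (dyadicCandidates x p).1 else 0 := by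
  split_ifs with h
  · exact hbd _ h
  · rw [Real.norm_eq_abs, abs_nonpos_iff]
    exact not_not.mp fun hne => h (hF _ hne).2

theorem summable_of_dyadic_support : Summable F :=
  ((dyadicCandidates_injective x).summable_iff fun _ hq =>
      not_not.mp fun hne => hq (support_subset_range_dyadicCandidates hF hne)).mp
    ((hasSum_dyadicCandidates_majorant x C n).summable.of_norm_bounded
      (norm_comp_dyadicCandidates_le hF hbd))

theorem abs_tsum_le_of_dyadic_support : |∑' q, F q| ≤ 4 * C * 2 ^ n := by
  rw [← (dyadicCandidates_injective x).tsum_eq (support_subset_range_dyadicCandidates hF)]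
  calc |∑' p, F (dyadicCandidates x p)|
      ≤ C * 2 ^ (n + 1) + C * 2 ^ (n + 1) :=
        tsum_of_norm_bounded (hasSum_dyadicCandidates_majorant x C n)
          (norm_comp_dyadicCandidates_le hF hbd)
    _ = 4 * C * 2 ^ n := by rw [zpow_add_one₀ two_ne_zero]; ring

end DyadicSupport

theorem abs_mul_mul_le_of_abs_le_rpow_half {ℓ a c b w y M : ℝ} (hℓ : 0 < ℓ)
    (hb : |b| ≤ a * ℓ ^ (1 / 2 : ℝ)) (hw : |w| ≤ c * ℓ ^ (-(1 / 2 : ℝ))) (hy : |y| ≤ M) :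
    |b * y * w| ≤ a * c * M := calc
  |b * y * w| = |b| * |y| * |w| := by rw [abs_mul, abs_mul]
  _ ≤ a * ℓ ^ (1 / 2 : ℝ) * M * (c * ℓ ^ (-(1 / 2 : ℝ))) := by
    gcongr
    · exact mul_nonneg ((abs_nonneg b).trans hb) ((abs_nonneg y).trans hy)
    · exact (abs_nonneg b).trans hb
  _ = a * c * M * (ℓ ^ (1 / 2 : ℝ) * ℓ ^ (-(1 / 2 : ℝ))) := by ring
  _ = a * c * M := by rw [← Real.rpow_add hℓ, add_neg_cancel, Real.rpow_zero, mul_one]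

theorem le_of_le_mul_one_add_div_rpow_neg {a D r c y : ℝ} {N : ℕ} (hD : 0 ≤ D) (hr : 0 ≤ r)
    (h : a ≤ D * (1 + |y - c| / r) ^ (-(N : ℝ))) : a ≤ D :=
  h.trans <| mul_le_of_le_one_right hD <| Real.rpow_le_one_of_one_le_of_nonpos
    (le_add_of_nonneg_right (by positivity)) (by simp)

theorem half_lt_abs_sub_of_two_mul_lt {t t' x : ℝ} (h : 2 * |t - t'| < |t - x|) :
    |t - x| / 2 < |t' - x| := by
  linarith [abs_sub_le t t' x]

section ParaproductKernel

variable {B Cb Cw Cφ : ℝ} {N : ℕ} {β : ℤ × ℤ → ℝ} {ψ φ : ℤ × ℤ → ℝ → ℝ}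

theorem abs_le_of_bump_bound (hCφ : 0 ≤ Cφ)
    (hφbd : ∀ (q : ℤ × ℤ) (x : ℝ), |φ q x| ≤
      Cφ / (2 : ℝ) ^ (-q.1) *
        (1 + |x - (2 : ℝ) ^ (-q.1) * (q.2 + 1/2)| / (2 : ℝ) ^ (-q.1)) ^ (-(N : ℝ)))
    (q : ℤ × ℤ) (y : ℝ) : |φ q y| ≤ Cφ * 2 ^ q.1 := by
  simpa only [zpow_neg, div_inv_eq_mul] using
    le_of_le_mul_one_add_div_rpow_neg (by positivity) (by positivity) (hφbd q y)

theorem abs_sub_le_of_bump_deriv_bound (hCφ : 0 ≤ Cφ) (hφdiff : ∀ q : ℤ × ℤ, Differentiable ℝ (φ q))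
    (hφ'bd : ∀ (q : ℤ × ℤ) (x : ℝ), |deriv (φ q) x| ≤
      Cφ / ((2 : ℝ) ^ (-q.1)) ^ 2 *
        (1 + |x - (2 : ℝ) ^ (-q.1) * (q.2 + 1/2)| / (2 : ℝ) ^ (-q.1)) ^ (-(N : ℝ)))
    (q : ℤ × ℤ) (t t' : ℝ) : |φ q t - φ q t'| ≤ Cφ * (2 ^ q.1) ^ 2 * |t - t'| := by
  have hφ' (y : ℝ) : ‖deriv (φ q) y‖ ≤ Cφ * (2 ^ q.1) ^ 2 := by
    simpa only [Real.norm_eq_abs, zpow_neg, inv_pow, div_inv_eq_mul] using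
      le_of_le_mul_one_add_div_rpow_neg (by positivity) (by positivity) (hφ'bd q y)
  simpa only [Real.norm_eq_abs] using Convex.norm_image_sub_le_of_norm_deriv_le
    (fun y _ => hφdiff q y) (fun y _ => hφ' y) convex_univ (mem_univ t') (mem_univ t)

theorem mem_dyadicInterval_and_scale_le (hψsupp : ∀ q, support (ψ q) ⊆ dyadicInterval q)
    (hφsupp : ∀ q, support (φ q) ⊆ dyadicInterval q) {t x r : ℝ} {n : ℤ} (hr : 0 < r)
    (hn : r⁻¹ ≤ 2 ^ (n + 1)) (h : r < |t - x|) {q : ℤ × ℤ} (hφ : φ q t ≠ 0) (hψ : ψ q x ≠ 0) :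
    x ∈ dyadicInterval q ∧ q.1 ≤ n :=
  ⟨hψsupp q hψ, scale_le_of_mem_dyadicInterval (hφsupp q hφ) (hψsupp q hψ) hr hn h⟩

variable (hβ : ∀ q : ℤ × ℤ, |β q| ≤ Cb * B * ((2 : ℝ) ^ (-q.1)) ^ (1/2 : ℝ))
  (hψbd : ∀ (q : ℤ × ℤ) (x : ℝ), |ψ q x| ≤ Cw * ((2 : ℝ) ^ (-q.1)) ^ (-(1/2 : ℝ)))
  (hψsupp : ∀ q, support (ψ q) ⊆ dyadicInterval q)
  (hφsupp : ∀ q, support (φ q) ⊆ dyadicInterval q)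

include hβ hψbd hψsupp hφsupp

theorem summable_paraproduct_kernel (hCφ : 0 ≤ Cφ)
    (hφbd : ∀ (q : ℤ × ℤ) (x : ℝ), |φ q x| ≤
      Cφ / (2 : ℝ) ^ (-q.1) *
        (1 + |x - (2 : ℝ) ^ (-q.1) * (q.2 + 1/2)| / (2 : ℝ) ^ (-q.1)) ^ (-(N : ℝ)))
    {t x r : ℝ} (hr : 0 < r) (h : r < |t - x|) :
    Summable fun q => β q * φ q t * ψ q x := by
  obtain ⟨n, -, hn⟩ := exists_mem_Ioc_zpow (inv_pos.2 hr) one_lt_two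
  refine summable_of_dyadic_support (C := Cb * B * Cw * Cφ) (n := n)
    (fun q hq => mem_dyadicInterval_and_scale_le hψsupp hφsupp hr hn h
      (right_ne_zero_of_mul (left_ne_zero_of_mul hq)) (right_ne_zero_of_mul hq)) fun q _ => ?_
  rw [mul_assoc _ Cφ]
  exact abs_mul_mul_le_of_abs_le_rpow_half (zpow_pos two_pos _) (hβ q) (hψbd q x)
    (abs_le_of_bump_bound hCφ hφbd q t)

theorem abs_tsum_paraproduct_kernel_sub_le (hB : 0 ≤ B) (hCb : 0 ≤ Cb) (hCw : 0 ≤ Cw)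
    (hCφ : 0 ≤ Cφ) (hφdiff : ∀ q : ℤ × ℤ, Differentiable ℝ (φ q))
    (hφ'bd : ∀ (q : ℤ × ℤ) (x : ℝ), |deriv (φ q) x| ≤
      Cφ / ((2 : ℝ) ^ (-q.1)) ^ 2 *
        (1 + |x - (2 : ℝ) ^ (-q.1) * (q.2 + 1/2)| / (2 : ℝ) ^ (-q.1)) ^ (-(N : ℝ)))
    {t t' x : ℝ} (h : 2 * |t - t'| < |t - x|) :
    |∑' q, (β q * φ q t * ψ q x - β q * φ q t' * ψ q x)| ≤
      16 * Cb * Cw * Cφ * B * |t - t'| / |t - x| ^ 2 := by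
  set d := |t - x|
  set δ := |t - t'|
  have hd : 0 < d := (mul_nonneg zero_le_two (abs_nonneg _)).trans_lt h
  obtain ⟨n, hn, hn'⟩ := exists_mem_Ioc_zpow (inv_pos.2 (half_pos hd)) one_lt_two
  have hsupp (q : ℤ × ℤ) (hq : β q * φ q t * ψ q x - β q * φ q t' * ψ q x ≠ 0) :
      x ∈ dyadicInterval q ∧ q.1 ≤ n := by
    rw [← sub_mul, ← mul_sub] at hq
    have hφsub := right_ne_zero_of_mul (left_ne_zero_of_mul hq)
    by_cases hφt : φ q t = 0
    · exact mem_dyadicInterval_and_scale_le hψsupp hφsupp (half_pos hd) hn'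
        (half_lt_abs_sub_of_two_mul_lt h) (fun h' => hφsub (by rw [hφt, h', sub_zero]))
        (right_ne_zero_of_mul hq)
    · exact mem_dyadicInterval_and_scale_le hψsupp hφsupp (half_pos hd) hn' (half_lt_self hd) hφt
        (right_ne_zero_of_mul hq)
  have hbd (q : ℤ × ℤ) (hq : q.1 ≤ n) : |β q * φ q t * ψ q x - β q * φ q t' * ψ q x| ≤
      Cb * B * Cw * Cφ * δ * 2 ^ n * 2 ^ q.1 := by
    rw [← sub_mul, ← mul_sub]
    calc _ ≤ Cb * B * Cw * (Cφ * (2 ^ q.1) ^ 2 * δ) :=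
          abs_mul_mul_le_of_abs_le_rpow_half (zpow_pos two_pos _) (hβ q) (hψbd q x)
            (abs_sub_le_of_bump_deriv_bound hCφ hφdiff hφ'bd q t t')
      _ = Cb * B * Cw * Cφ * δ * 2 ^ q.1 * 2 ^ q.1 := by ring
      _ ≤ Cb * B * Cw * Cφ * δ * 2 ^ n * 2 ^ q.1 := by gcongr; exact one_le_two
  calc _ ≤ 4 * (Cb * B * Cw * Cφ * δ * 2 ^ n) * 2 ^ n := abs_tsum_le_of_dyadic_support hsupp hbd
    _ = 4 * (Cb * B * Cw * Cφ * δ) * (2 ^ n) ^ 2 := by ring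
    _ ≤ 4 * (Cb * B * Cw * Cφ * δ) * ((d / 2)⁻¹) ^ 2 := by gcongr
    _ = 16 * Cb * Cw * Cφ * B * δ / d ^ 2 := by field_simp; ring

end ParaproductKernel

theorem statement19
    (B Cb Cw Cφ : ℝ) (hB : 0 ≤ B) (hCb : 0 < Cb) (hCw : 0 < Cw) (hCφ : 0 < Cφ)
    (NN : ℕ) (β : ℤ × ℤ → ℝ) (ψ φf : ℤ × ℤ → ℝ → ℝ)
    (hβ : ∀ q : ℤ × ℤ, |β q| ≤ Cb * B * ((2 : ℝ) ^ (-q.1)) ^ (1/2 : ℝ))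
    (hψbd : ∀ (q : ℤ × ℤ) (x : ℝ), |ψ q x| ≤ Cw * ((2 : ℝ) ^ (-q.1)) ^ (-(1/2 : ℝ)))
    (hψsupp : ∀ q : ℤ × ℤ, Function.support (ψ q) ⊆
      Set.Icc ((2 : ℝ) ^ (-q.1) * q.2) ((2 : ℝ) ^ (-q.1) * (q.2 + 1)))
    (hφdiff : ∀ q : ℤ × ℤ, Differentiable ℝ (φf q))
    (hφbd : ∀ (q : ℤ × ℤ) (x : ℝ), |φf q x| ≤
      Cφ / (2 : ℝ) ^ (-q.1) *
        (1 + |x - (2 : ℝ) ^ (-q.1) * (q.2 + 1/2)| / (2 : ℝ) ^ (-q.1)) ^ (-(NN : ℝ)))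
    (hφ'bd : ∀ (q : ℤ × ℤ) (x : ℝ), |deriv (φf q) x| ≤
      Cφ / ((2 : ℝ) ^ (-q.1)) ^ 2 *
        (1 + |x - (2 : ℝ) ^ (-q.1) * (q.2 + 1/2)| / (2 : ℝ) ^ (-q.1)) ^ (-(NN : ℝ)))
    (hφsupp : ∀ q : ℤ × ℤ, Function.support (φf q) ⊆
      Set.Icc ((2 : ℝ) ^ (-q.1) * q.2) ((2 : ℝ) ^ (-q.1) * (q.2 + 1))) :
    ∃ A > 0, ∀ t x t' : ℝ, 2 * |t - t'| < |t - x| →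
      |(∑' q : ℤ × ℤ, β q * φf q t * ψ q x) -
          (∑' q : ℤ × ℤ, β q * φf q t' * ψ q x)|
        ≤ A * B * |t - t'| / |t - x| ^ 2 := by
  refine ⟨16 * Cb * Cw * Cφ, by positivity, fun t x t' h => ?_⟩
  have hd : 0 < |t - x| := (mul_nonneg zero_le_two (abs_nonneg _)).trans_lt h
  have hsum {t₀ : ℝ} (ht₀ : |t - x| / 2 < |t₀ - x|) :=
    summable_paraproduct_kernel hβ hψbd hψsupp hφsupp hCφ.le hφbd (half_pos hd) ht₀
  rw [← (hsum (half_lt_self hd)).tsum_sub (hsum (half_lt_abs_sub_of_two_mul_lt h))]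
  exact abs_tsum_paraproduct_kernel_sub_le hβ hψbd hψsupp hφsupp hB hCb.le hCw.le hCφ.le hφdiff
    hφ'bd h
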